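/- The category Rec is weakly locally cartesian closed: for every object A ⊆ ℕ, the slice category Rec/A has finite products and weak exponentials, i.e. for all objects q : B → A and r : C → A of Rec/A there exist an object w : W → A of Rec/A and a morphism ev : w ×_A q → r in Rec/A such that every morphism f : d ×_A q → r in Rec/A (for any object d : D → A) factors, not necessarily uniquely, as ev ∘ (f' ×_A id_q) for some morphism f' : d → w in Rec/A. -/

import Mathlib

/-!
Each slice `Rec/A` has the identity of `A` as terminal object, and fibre products realised on
the Cantor codes `⟨x, y⟩` of compatible pairs. A weak exponential of `r` by `q` consists of the
codes `⟨a, e⟩` for which Kleene application `{e}` maps the fibre of `q` over `a` into the fibre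
of `r` over `a`, and evaluation is Kleene application itself, tracked by the universal partial
recursive function. A map `g : d ×_A q ⟶ r` has a code `c` tracking it, and the s-m-n theorem
(`Code.curry`) turns `c` into the transpose `x ↦ ⟨d x, curry c x⟩`. Transposes are not unique
because a function has many codes.
-/

open CategoryTheory

namespace RecPaper

/-- Kleene application `{e}(n)`: apply the partial recursive function with Gödel code `e`
to the input `n`. -/
def kap (e n : ℕ) : Part ℕ :=
  Nat.Partrec.Code.eval (Denumerable.ofNat Nat.Partrec.Code e) n

/-- The type of objects of the category `Rec`: subsets of `ℕ`. -/
def RecCat : Type := Set ℕ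

/-- The underlying subset of `ℕ` of an object of `Rec`. -/
def RecCat.carrier (A : RecCat) : Set ℕ := A

/-- View a subset of `ℕ` as an object of `Rec`. -/
def RecCat.ofSet (A : Set ℕ) : RecCat := A

instance : CoeSort RecCat Type := ⟨fun A => {n : ℕ // n ∈ A.carrier}⟩

/-- A function between subsets of `ℕ` is *tracked* if there is a partial recursive
function, defined on the whole domain, whose restriction to the domain is the given
function. -/
def Tracked {A B : RecCat} (f : A → B) : Prop :=
  ∃ g : ℕ →. ℕ, Nat.Partrec g ∧ ∀ a : A, g a.val = Part.some (f a).val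

/-- The category `Rec` of subsets of `ℕ` and restrictions of partial recursive functions. -/
instance : Category RecCat where
  Hom A B := {f : A → B // Tracked f}
  id A := ⟨fun a => a, (fun n => n : ℕ → ℕ), Nat.Partrec.of_primrec Nat.Primrec.id,
    fun _ => rfl⟩
  comp {A B C} f g := ⟨fun a => g.1 (f.1 a), by
    obtain ⟨u, pu, hu⟩ := f.2
    obtain ⟨v, pv, hv⟩ := g.2
    refine ⟨fun n => u n >>= v, pv.comp pu, fun a => ?_⟩
    exact (congrArg (fun x => Part.bind x v) (hu a)).trans ((Part.bind_some _ _).trans (hv (f.1 a)))⟩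
  id_comp _ := rfl
  comp_id _ := rfl
  assoc _ _ _ := rfl

/-- The underlying function of a morphism of `Rec`. -/
def hfun {A B : RecCat} (f : A ⟶ B) : A → B := f.1

/-- The value of a morphism of `Rec` on an element, as a natural number. -/
def happ {A B : RecCat} (f : A ⟶ B) (a : A) : ℕ := (hfun f a).val

open CategoryTheory.Limits

lemma exists_factorization_of_isLimit {C : Type*} [Category C] {d q r w wq P dq : C}
    {π₁ : wq ⟶ w} {π₂ : wq ⟶ q} (ev : wq ⟶ r) {p₁ : P ⟶ d} {p₂ : P ⟶ q}
    (hP : IsLimit (BinaryFan.mk p₁ p₂))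
    (hfac : ∀ g : P ⟶ r, ∃ (f' : d ⟶ w) (u : P ⟶ wq),
      u ≫ π₁ = p₁ ≫ f' ∧ u ≫ π₂ = p₂ ∧ u ≫ ev = g)
    {ρ₁ : dq ⟶ d} {ρ₂ : dq ⟶ q} (hdq : IsLimit (BinaryFan.mk ρ₁ ρ₂)) (f : dq ⟶ r) :
    ∃ (f' : d ⟶ w) (u : dq ⟶ wq), u ≫ π₁ = ρ₁ ≫ f' ∧ u ≫ π₂ = ρ₂ ∧ u ≫ ev = f := by
  let e := hdq.conePointUniqueUpToIso hP
  have he₁ : e.hom ≫ p₁ = ρ₁ := hdq.conePointUniqueUpToIso_hom_comp hP ⟨.left⟩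
  have he₂ : e.hom ≫ p₂ = ρ₂ := hdq.conePointUniqueUpToIso_hom_comp hP ⟨.right⟩
  obtain ⟨f', u, hu₁, hu₂, hu⟩ := hfac (e.inv ≫ f)
  refine ⟨f', e.hom ≫ u, ?_, ?_, ?_⟩
  · rw [Category.assoc, hu₁, ← Category.assoc, he₁]
  · rw [Category.assoc, hu₂, he₂]
  · rw [Category.assoc, hu, Iso.hom_inv_id_assoc]

lemma Tracked.of_computable {X Y : RecCat} {f : X → Y} {h : ℕ → ℕ} (hh : Computable h)
    (hf : ∀ a, (f a).val = h a.val) : Tracked f :=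
  ⟨fun n => Part.some (h n), Partrec.nat_iff.mp hh.partrec, fun a => by rw [hf]⟩

lemma Tracked.of_computable₂ {X Y Z W : RecCat} {f : X → Y} {g : X → Z} {k : X → W}
    {h : ℕ → ℕ → ℕ} (hh : Computable₂ h) (hf : Tracked f) (hg : Tracked g)
    (hk : ∀ a, (k a).val = h (f a).val (g a).val) : Tracked k := by
  obtain ⟨u, pu, hu⟩ := hf
  obtain ⟨v, pv, hv⟩ := hg
  refine ⟨fun n => (u n).bind fun a => (v n).map (h a), Partrec.nat_iff.mp ?_,
    fun a => by simp [hu, hv, hk]⟩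
  exact (Partrec.nat_iff.mpr pu).bind (((Partrec.nat_iff.mpr pv).comp Computable.fst).map
    (hh.comp (Computable.snd.comp Computable.fst) Computable.snd))

def Tracks (c : Nat.Partrec.Code) {X Y : RecCat} (f : X ⟶ Y) : Prop :=
  ∀ a : X, c.eval a.val = Part.some (f.1 a).val

namespace RecCat

lemma hom_ext {X Y : RecCat} {f g : X ⟶ Y} (h : ∀ a, (f.1 a).val = (g.1 a).val) : f = g :=
  Subtype.ext (funext fun a => Subtype.ext (h a))

lemma comp_apply {X Y Z : RecCat} (f : X ⟶ Y) (g : Y ⟶ Z) (a : X) :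
    (f ≫ g).1 a = g.1 (f.1 a) := rfl

lemma apply_congr {X Y : RecCat} (f : X ⟶ Y) {a b : X} (h : a.val = b.val) : f.1 a = f.1 b :=
  congrArg f.1 (Subtype.ext h)

lemma over_hom_ext {A : RecCat} {X Y : Over A} {f g : X ⟶ Y}
    (h : ∀ a, (f.left.1 a).val = (g.left.1 a).val) : f = g :=
  Over.OverMorphism.ext (hom_ext h)

lemma over_w_apply {A : RecCat} {X Y : Over A} (f : X ⟶ Y) (a : X.left) :
    Y.hom.1 (f.left.1 a) = X.hom.1 a :=
  congrArg (fun h : X.left ⟶ A => h.1 a) (Over.w f)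

end RecCat

open RecCat

variable {A : RecCat}

def fibreProdSet (X Y : Over A) : Set ℕ :=
  {n | ∃ (hx : n.unpair.1 ∈ X.left.carrier) (hy : n.unpair.2 ∈ Y.left.carrier),
    X.hom.1 ⟨_, hx⟩ = Y.hom.1 ⟨_, hy⟩}

def fibreProdFst (X Y : Over A) : RecCat.ofSet (fibreProdSet X Y) ⟶ X.left :=
  ⟨fun p => ⟨p.val.unpair.1, p.2.1⟩,
    Tracked.of_computable (Computable.fst.comp Computable.unpair) fun _ => rfl⟩

def fibreProdSnd (X Y : Over A) : RecCat.ofSet (fibreProdSet X Y) ⟶ Y.left :=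
  ⟨fun p => ⟨p.val.unpair.2, p.2.2.1⟩,
    Tracked.of_computable (Computable.snd.comp Computable.unpair) fun _ => rfl⟩

def fibreProd (X Y : Over A) : Over A := Over.mk (fibreProdFst X Y ≫ X.hom)

namespace fibreProd

variable (X Y : Over A)

def fst : fibreProd X Y ⟶ X := Over.homMk (fibreProdFst X Y) rfl

def snd : fibreProd X Y ⟶ Y :=
  Over.homMk (fibreProdSnd X Y) (hom_ext fun p => congrArg Subtype.val p.2.2.2.symm)

lemma fst_apply (p : (fibreProd X Y).left) : ((fst X Y).left.1 p).val = p.val.unpair.1 := rfl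

lemma snd_apply (p : (fibreProd X Y).left) : ((snd X Y).left.1 p).val = p.val.unpair.2 := rfl

variable {X Y} {Z : Over A}

def lift (f : Z ⟶ X) (g : Z ⟶ Y) : Z ⟶ fibreProd X Y :=
  Over.homMk
    ⟨fun z => ⟨Nat.pair (f.left.1 z).val (g.left.1 z).val, by simp, by simp,
      (apply_congr X.hom (by simp)).trans <| (over_w_apply f z).trans <|
        (over_w_apply g z).symm.trans (apply_congr Y.hom (by simp))⟩,
      Tracked.of_computable₂ Primrec₂.natPair.to_comp f.left.2 g.left.2 fun _ => rfl⟩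
    (hom_ext fun z => congrArg Subtype.val
      ((apply_congr X.hom (congrArg Prod.fst (Nat.unpair_pair _ _))).trans (over_w_apply f z)))

lemma lift_apply (f : Z ⟶ X) (g : Z ⟶ Y) (z : Z.left) :
    ((lift f g).left.1 z).val = Nat.pair (f.left.1 z).val (g.left.1 z).val := rfl

lemma lift_fst (f : Z ⟶ X) (g : Z ⟶ Y) : lift f g ≫ fst X Y = f :=
  over_hom_ext fun z => by
    change ((lift f g).left.1 z).val.unpair.1 = _
    rw [lift_apply, Nat.unpair_pair]

lemma lift_snd (f : Z ⟶ X) (g : Z ⟶ Y) : lift f g ≫ snd X Y = g :=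
  over_hom_ext fun z => by
    change ((lift f g).left.1 z).val.unpair.2 = _
    rw [lift_apply, Nat.unpair_pair]

variable (X Y)

def isLimit : IsLimit (BinaryFan.mk (fst X Y) (snd X Y)) :=
  BinaryFan.isLimitMk (fun s => lift s.fst s.snd) (fun _ => lift_fst _ _) (fun _ => lift_snd _ _)
    fun _ _ h₁ h₂ => over_hom_ext fun z =>
      (Nat.pair_unpair _).symm.trans <| congrArg₂ Nat.pair
        (congrArg (fun k => (k.left.1 z).val) h₁) (congrArg (fun k => (k.left.1 z).val) h₂)

end fibreProd

lemma hasFiniteProducts_over (A : RecCat) : HasFiniteProducts (Over A) :=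
  have : HasTerminal (Over A) := Over.mkIdTerminal.hasTerminal
  have : HasBinaryProducts (Over A) :=
    @hasBinaryProducts_of_hasLimit_pair _ _ (fun {X Y} => ⟨⟨⟨_, fibreProd.isLimit X Y⟩⟩⟩)
  hasFiniteProducts_of_has_binary_and_terminal

lemma kap_partrec₂ : Partrec₂ kap :=
  Nat.Partrec.Code.eval_part.comp ((Computable.ofNat _).comp Computable.fst) Computable.snd

lemma kap_encode_curry (c : Nat.Partrec.Code) (m n : ℕ) :
    kap (Encodable.encode (c.curry m)) n = c.eval (Nat.pair m n) := by
  rw [kap, Denumerable.ofNat_encode, Nat.Partrec.Code.eval_curry]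

def weakExpSet (q r : Over A) : Set ℕ :=
  {n | n.unpair.1 ∈ A.carrier ∧ ∀ b : q.left, (q.hom.1 b).val = n.unpair.1 →
    ∃ c : r.left, c.val ∈ kap n.unpair.2 b.val ∧ (r.hom.1 c).val = n.unpair.1}

def weakExpHom (q r : Over A) : RecCat.ofSet (weakExpSet q r) ⟶ A :=
  ⟨fun n => ⟨n.val.unpair.1, n.2.1⟩,
    Tracked.of_computable (Computable.fst.comp Computable.unpair) fun _ => rfl⟩

def weakExp (q r : Over A) : Over A := Over.mk (weakExpHom q r)

namespace weakExp

variable (q r : Over A)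

lemma exists_mem_kap (x : (fibreProd (weakExp q r) q).left) :
    ∃ c : r.left, c.val ∈ kap x.val.unpair.1.unpair.2 x.val.unpair.2 ∧
      (r.hom.1 c).val = x.val.unpair.1.unpair.1 :=
  x.2.1.2 ⟨_, x.2.2.1⟩ (congrArg Subtype.val x.2.2.2).symm

noncomputable def evLeft : (fibreProd (weakExp q r) q).left ⟶ r.left :=
  ⟨fun x => (exists_mem_kap q r x).choose, fun n => kap n.unpair.1.unpair.2 n.unpair.2,
    Partrec.nat_iff.mp <| kap_partrec₂.comp
      ((Computable.snd.comp Computable.unpair).comp (Computable.fst.comp Computable.unpair))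
      (Computable.snd.comp Computable.unpair),
    fun x => Part.eq_some_iff.mpr (exists_mem_kap q r x).choose_spec.1⟩

noncomputable def ev : fibreProd (weakExp q r) q ⟶ r :=
  Over.homMk (evLeft q r) (hom_ext fun x => (exists_mem_kap q r x).choose_spec.2)

lemma ev_apply_mem_kap (x : (fibreProd (weakExp q r) q).left) :
    ((ev q r).left.1 x).val ∈ kap x.val.unpair.1.unpair.2 x.val.unpair.2 :=
  (exists_mem_kap q r x).choose_spec.1

variable {q r} {d : Over A} {g : fibreProd d q ⟶ r} {c : Nat.Partrec.Code}

lemma pair_curry_mem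
    (hc : Tracks c g.left) (x : d.left) :
    Nat.pair (d.hom.1 x).val (Encodable.encode (c.curry x.val)) ∈ weakExpSet q r := by
  refine ⟨by simp, fun b hb => ?_⟩
  simp only [Nat.unpair_pair] at hb ⊢
  let z : (fibreProd d q).left :=
    ⟨Nat.pair x.val b.val, by simp, by simp, (apply_congr d.hom (by simp)).trans <|
      (Subtype.ext hb.symm).trans (apply_congr q.hom (by simp))⟩
  refine ⟨g.left.1 z, ?_, ?_⟩
  · rw [kap_encode_curry]
    exact Part.eq_some_iff.mp (hc z)
  · exact congrArg Subtype.val ((over_w_apply g z).trans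
      (apply_congr d.hom (congrArg Prod.fst (Nat.unpair_pair x.val b.val))))

def transpose (hc : Tracks c g.left) :
    d ⟶ weakExp q r :=
  Over.homMk
    ⟨fun x => ⟨_, pair_curry_mem hc x⟩,
      Tracked.of_computable₂ (h := fun a n => Nat.pair a (Encodable.encode (c.curry n)))
        (Primrec₂.natPair.to_comp.comp Computable.fst (Computable.encode.comp
          (Nat.Partrec.Code.primrec₂_curry.to_comp.comp (Computable.const c) Computable.snd)))
        d.hom.2 (Tracked.of_computable Computable.id fun _ => rfl) fun _ => rfl⟩
    (hom_ext fun _ => congrArg Prod.fst (Nat.unpair_pair _ _))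

lemma transpose_apply
    (hc : Tracks c g.left) (x : d.left) :
    ((transpose hc).left.1 x).val = Nat.pair (d.hom.1 x).val (Encodable.encode (c.curry x.val)) :=
  rfl

lemma lift_transpose_ev
    (hc : Tracks c g.left) :
    fibreProd.lift (fibreProd.fst d q ≫ transpose hc) (fibreProd.snd d q) ≫ ev q r = g :=
  over_hom_ext fun z => by
    have h := ev_apply_mem_kap q r
      ((fibreProd.lift (fibreProd.fst d q ≫ transpose hc) (fibreProd.snd d q)).left.1 z)
    simp only [fibreProd.lift_apply, Over.comp_left, comp_apply, fibreProd.fst_apply,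
      fibreProd.snd_apply, transpose_apply, Nat.unpair_pair, kap_encode_curry, Nat.pair_unpair,
      hc z] at h
    exact Part.mem_some_iff.mp h

lemma exists_lift_ev_eq (g : fibreProd d q ⟶ r) :
    ∃ f' : d ⟶ weakExp q r,
      fibreProd.lift (fibreProd.fst d q ≫ f') (fibreProd.snd d q) ≫ ev q r = g := by
  obtain ⟨G, hG, hGg⟩ := g.left.2
  obtain ⟨c, rfl⟩ := Nat.Partrec.Code.exists_code.mp hG
  exact ⟨transpose hGg, lift_transpose_ev hGg⟩

end weakExp

open CategoryTheory.Limits in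
/-- The category `Rec` is weakly locally cartesian closed: every slice `Rec/A` has finite
products, and for all objects `q`, `r` of `Rec/A` there are an object `w` and a morphism
`ev : w ×_A q ⟶ r` through which every morphism `d ×_A q ⟶ r` factors (not necessarily
uniquely) as `ev ∘ (f' ×_A id)`. -/
theorem rec_weakly_locally_cartesian_closed :
    ∀ A : RecCat,
      HasFiniteProducts (Over A) ∧
      ∀ q r : Over A,
        ∃ (w wq : Over A) (π₁ : wq ⟶ w) (π₂ : wq ⟶ q),
          Nonempty (IsLimit (BinaryFan.mk π₁ π₂)) ∧
          ∃ ev : wq ⟶ r,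
            ∀ (d dq : Over A) (ρ₁ : dq ⟶ d) (ρ₂ : dq ⟶ q),
              Nonempty (IsLimit (BinaryFan.mk ρ₁ ρ₂)) →
              ∀ f : dq ⟶ r,
                ∃ (f' : d ⟶ w) (u : dq ⟶ wq),
                  u ≫ π₁ = ρ₁ ≫ f' ∧ u ≫ π₂ = ρ₂ ∧ u ≫ ev = f := by
  intro A
  refine ⟨hasFiniteProducts_over A, fun q r => ⟨weakExp q r, _, _, _, ⟨fibreProd.isLimit _ _⟩,
    weakExp.ev q r, fun d dq ρ₁ ρ₂ ⟨hdq⟩ f => ?_⟩⟩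
  refine exists_factorization_of_isLimit _ (fibreProd.isLimit d q) (fun g => ?_) hdq f
  obtain ⟨f', hf'⟩ := weakExp.exists_lift_ev_eq g
  exact ⟨f', _, fibreProd.lift_fst _ _, fibreProd.lift_snd _ _, hf'⟩

end RecPaper
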